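/- Let Γ be a simple connected 3-regular graph of order n, and let μ be the algebraic connectivity of Γ (the second smallest eigenvalue of the Laplacian matrix of Γ). Then the girth of Γ satisfies girth(Γ) ≥ ⌈n(μ−1)/μ⌉. -/

import Mathlib

open Finset SimpleGraph

/-- `μ` is the second smallest (counted with multiplicity) value of the family `e`. -/
def IsSecondSmallest {ι : Type*} (e : ι → ℝ) (μ : ℝ) : Prop :=
  ∃ i₀ i₁ : ι, i₀ ≠ i₁ ∧ e i₀ ≤ μ ∧ e i₁ = μ ∧ ∀ j : ι, j ≠ i₀ → μ ≤ e j

/-- `lam` is the largest value of the family `e`. -/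
def IsLargest {ι : Type*} (e : ι → ℝ) (lam : ℝ) : Prop :=
  (∃ i : ι, e i = lam) ∧ ∀ i : ι, e i ≤ lam

/-!
Let `S` be the vertex set of a shortest cycle, `g = |S|`. In a cubic graph every vertex of the
cycle has two of its three neighbours on the cycle, so at most `g` edges leave `S`. The vector
`n • 1_S - g • 1` is orthogonal to the constant vector, which spans the eigenspace of the only
eigenvalue below `μ`, so the Rayleigh quotient gives `μ g (n - g) ≤ n · #(edges leaving S) ≤ n g`,
that is `μ (n - g) ≤ n`.
-/

open Matrix

namespace Matrix.IsHermitian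

variable {V : Type*} [Fintype V] [DecidableEq V] {A : Matrix V V ℝ} (hA : A.IsHermitian)

theorem sum_dotProduct_eigenvectorBasis_mul (x y : V → ℝ) :
    ∑ j, (x ⬝ᵥ hA.eigenvectorBasis j) * (hA.eigenvectorBasis j ⬝ᵥ y) = x ⬝ᵥ y := by
  have := hA.eigenvectorBasis.sum_inner_mul_inner (WithLp.toLp 2 x) (WithLp.toLp 2 y)
  simp only [EuclideanSpace.inner_eq_star_dotProduct, star_trivial] at this
  simpa [dotProduct_comm] using this

theorem eigenvectorBasis_dotProduct_mulVec (j : V) (x : V → ℝ) :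
    hA.eigenvectorBasis j ⬝ᵥ (A *ᵥ x) = hA.eigenvalues j * (hA.eigenvectorBasis j ⬝ᵥ x) := by
  have hAT : Aᵀ = A := by simpa [conjTranspose_eq_transpose_of_trivial] using hA.eq
  rw [dotProduct_mulVec, ← mulVec_transpose, hAT, mulVec_eigenvectorBasis, smul_dotProduct,
    smul_eq_mul]

theorem dotProduct_mulVec_self_eq_sum (x : V → ℝ) :
    x ⬝ᵥ (A *ᵥ x) = ∑ j, hA.eigenvalues j * (hA.eigenvectorBasis j ⬝ᵥ x) ^ 2 := by
  rw [← hA.sum_dotProduct_eigenvectorBasis_mul]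
  refine sum_congr rfl fun j _ => ?_
  rw [hA.eigenvectorBasis_dotProduct_mulVec, dotProduct_comm]
  ring

theorem dotProduct_self_eq_sum (x : V → ℝ) :
    x ⬝ᵥ x = ∑ j, (hA.eigenvectorBasis j ⬝ᵥ x) ^ 2 := by
  rw [← hA.sum_dotProduct_eigenvectorBasis_mul]
  simp_rw [dotProduct_comm x, sq]

theorem eigenvectorBasis_dotProduct_eq_zero_of_mulVec_eq_zero {u : V → ℝ} (hu : A *ᵥ u = 0)
    {j : V} (hj : hA.eigenvalues j ≠ 0) : hA.eigenvectorBasis j ⬝ᵥ u = 0 := by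
  have := hA.eigenvectorBasis_dotProduct_mulVec j u
  rw [hu, dotProduct_zero, eq_comm, mul_eq_zero] at this
  exact this.resolve_left hj

/-- If `i₀` is the only index with a zero eigenvalue, the `i₀`-th eigenvector is a multiple of
any nonzero kernel vector `u`, hence orthogonal to everything orthogonal to `u`. -/
theorem eigenvectorBasis_dotProduct_eq_zero {u : V → ℝ} (hu : A *ᵥ u = 0) (hu₀ : u ≠ 0)
    {i₀ : V} (hker : ∀ j, j ≠ i₀ → hA.eigenvalues j ≠ 0) {x : V → ℝ} (hx : u ⬝ᵥ x = 0) :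
    hA.eigenvectorBasis i₀ ⬝ᵥ x = 0 := by
  have hcoef : ∀ y, u ⬝ᵥ y = (u ⬝ᵥ hA.eigenvectorBasis i₀) * (hA.eigenvectorBasis i₀ ⬝ᵥ y) := by
    intro y
    rw [← hA.sum_dotProduct_eigenvectorBasis_mul]
    refine sum_eq_single i₀ (fun j _ hj => ?_) (by simp)
    rw [dotProduct_comm, hA.eigenvectorBasis_dotProduct_eq_zero_of_mulVec_eq_zero hu (hker j hj),
      zero_mul]
  have hu_i₀ : u ⬝ᵥ hA.eigenvectorBasis i₀ ≠ 0 := by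
    intro h
    have := hcoef u
    rw [h, zero_mul] at this
    exact hu₀ (dotProduct_self_eq_zero.mp this)
  rw [hcoef, mul_eq_zero] at hx
  exact hx.resolve_left hu_i₀

theorem mul_dotProduct_self_le_dotProduct_mulVec_self {μ : ℝ} {i₀ : V}
    (hge : ∀ j, j ≠ i₀ → μ ≤ hA.eigenvalues j) {x : V → ℝ}
    (hx : hA.eigenvectorBasis i₀ ⬝ᵥ x = 0) :
    μ * (x ⬝ᵥ x) ≤ x ⬝ᵥ (A *ᵥ x) := by
  rw [hA.dotProduct_self_eq_sum, hA.dotProduct_mulVec_self_eq_sum, mul_sum]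
  refine sum_le_sum fun j _ => ?_
  rcases eq_or_ne j i₀ with rfl | hj
  · simp [hx]
  · exact mul_le_mul_of_nonneg_right (hge j hj) (sq_nonneg _)

theorem mul_dotProduct_self_le_of_mulVec_eq_zero {μ : ℝ} (hμ : 0 < μ) {i₀ : V}
    (hge : ∀ j, j ≠ i₀ → μ ≤ hA.eigenvalues j) {u : V → ℝ} (hu : A *ᵥ u = 0) (hu₀ : u ≠ 0)
    {x : V → ℝ} (hx : u ⬝ᵥ x = 0) :
    μ * (x ⬝ᵥ x) ≤ x ⬝ᵥ (A *ᵥ x) :=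
  hA.mul_dotProduct_self_le_dotProduct_mulVec_self hge <|
    hA.eigenvectorBasis_dotProduct_eq_zero hu hu₀ (fun j hj => (hμ.trans_le (hge j hj)).ne') hx

end Matrix.IsHermitian

namespace SimpleGraph

section Cycle

variable {V : Type*} [DecidableEq V] {G : SimpleGraph V}

theorem Walk.IsCycle.card_support_toFinset {a : V} {c : G.Walk a a} (hc : c.IsCycle) :
    #c.support.toFinset = c.length := by
  have htail : c.support.toFinset = c.support.tail.toFinset := by
    rw [← c.cons_tail_support, List.toFinset_cons, List.tail_cons]
    exact insert_eq_of_mem (List.mem_toFinset.mpr (end_mem_tail_support hc.not_nil))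
  rw [htail, List.toFinset_card_of_nodup hc.support_nodup, List.length_tail, Walk.length_support,
    Nat.add_sub_cancel]

variable [Fintype V] [DecidableRel G.Adj]

/-- Rotating the cycle to start at `v`, its second and penultimate vertices are two distinct
neighbours of `v` on the cycle. -/
theorem Walk.IsCycle.two_le_card_neighborFinset_inter {a v : V} {c : G.Walk a a}
    (hc : c.IsCycle) (hv : v ∈ c.support) :
    2 ≤ #(G.neighborFinset v ∩ c.support.toFinset) := by
  set c' := c.rotate v hv
  have hc' : c'.IsCycle := hc.rotate hv
  have hsub : {c'.snd, c'.penultimate} ⊆ G.neighborFinset v ∩ c.support.toFinset := by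
    intro w hw
    simp only [mem_insert, mem_singleton] at hw
    rw [mem_inter, mem_neighborFinset, List.mem_toFinset, ← Walk.mem_support_rotate_iff c v hv]
    rcases hw with rfl | rfl
    · exact ⟨c'.adj_snd hc'.not_nil, c'.getVert_mem_support 1⟩
    · exact ⟨(c'.adj_penultimate hc'.not_nil).symm, c'.getVert_mem_support _⟩
  calc 2 = #{c'.snd, c'.penultimate} := (card_pair hc'.snd_ne_penultimate).symm
    _ ≤ _ := card_le_card hsub

end Cycle

theorem Connected.not_isAcyclic_of_isRegularOfDegree {V : Type*} [Fintype V] {G : SimpleGraph V}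
    [DecidableRel G.Adj] {k : ℕ} (hconn : G.Connected) (hreg : G.IsRegularOfDegree k)
    (hk : 2 ≤ k) : ¬G.IsAcyclic := by
  intro hacyc
  have htree := (⟨hconn, hacyc⟩ : G.IsTree).card_edgeFinset
  have hsum := G.sum_degrees_eq_twice_card_edges
  simp only [hreg.degree_eq, sum_const, card_univ, smul_eq_mul] at hsum
  nlinarith

variable {V : Type*} [Fintype V] [DecidableEq V] {G : SimpleGraph V} [DecidableRel G.Adj]

variable (G) in
def cutSize (S : Finset V) : ℕ := ∑ v ∈ S, #(G.neighborFinset v \ S)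

variable (G) in
theorem indicator_dotProduct_lapMatrix_mulVec_indicator (S : Finset V) :
    (fun v => if v ∈ S then (1 : ℝ) else 0) ⬝ᵥ
      (G.lapMatrix ℝ *ᵥ fun v => if v ∈ S then (1 : ℝ) else 0) = G.cutSize S := by
  have hrow : ∀ v, (G.lapMatrix ℝ *ᵥ fun v => if v ∈ S then (1 : ℝ) else 0) v =
      G.degree v * (if v ∈ S then 1 else 0) - #(G.neighborFinset v ∩ S) := by
    intro v
    rw [lapMatrix_mulVec_apply, sum_boole, filter_mem_eq_inter]
  simp only [dotProduct, boole_mul, sum_ite_mem, univ_inter, cutSize, Nat.cast_sum]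
  refine sum_congr rfl fun v hv => ?_
  rw [hrow, if_pos hv, mul_one, ← card_neighborFinset_eq_degree,
    ← card_sdiff_add_card_inter (G.neighborFinset v) S]
  push_cast
  ring

/-- Fiedler's isoperimetric bound, from the Rayleigh quotient of `n • 1_S - #S • 1`. -/
theorem mul_card_mul_sub_card_le_mul_cutSize [Nonempty V] (hL : (G.lapMatrix ℝ).IsHermitian)
    {μ : ℝ} (hμ : 0 < μ) {i₀ : V} (hge : ∀ j, j ≠ i₀ → μ ≤ hL.eigenvalues j) (S : Finset V) :
    μ * #S * ((Fintype.card V : ℝ) - #S) ≤ Fintype.card V * G.cutSize S := by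
  set L := G.lapMatrix ℝ
  set n : ℝ := (Fintype.card V : ℝ)
  set s : ℝ := (#S : ℝ)
  set χ : V → ℝ := fun v => if v ∈ S then 1 else 0
  set one : V → ℝ := fun _ => 1
  have hL_one : L *ᵥ one = 0 := G.lapMatrix_mulVec_const_eq_zero
  have hone_L : ∀ z, one ⬝ᵥ (L *ᵥ z) = 0 := fun z => by
    rw [dotProduct_mulVec, ← mulVec_transpose, (G.isSymm_lapMatrix (R := ℝ)).eq, hL_one,
      zero_dotProduct]
  have hone_one : one ⬝ᵥ one = n := by simp [one, dotProduct, n]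
  have hone_χ : one ⬝ᵥ χ = s := by simp [one, χ, dotProduct, s]
  have hχ_χ : χ ⬝ᵥ χ = s := by simp [χ, dotProduct, s]
  have hcut : χ ⬝ᵥ (L *ᵥ χ) = G.cutSize S := G.indicator_dotProduct_lapMatrix_mulVec_indicator S
  have hone_ne : one ≠ 0 := fun h => by simpa [one] using congrFun h (Classical.arbitrary V)
  have hn : 0 < n := by simp [n, Fintype.card_pos]
  set y : V → ℝ := n • χ - s • one
  have horth : one ⬝ᵥ y = 0 := by
    simp only [y, dotProduct_sub, dotProduct_smul, hone_one, hone_χ, smul_eq_mul]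
    ring
  have hyy : y ⬝ᵥ y = n * s * (n - s) := by
    simp only [y, dotProduct_sub, sub_dotProduct, dotProduct_smul, smul_dotProduct, hone_one,
      hone_χ, hχ_χ, dotProduct_comm χ one, smul_eq_mul]
    ring
  have hyLy : y ⬝ᵥ (L *ᵥ y) = n ^ 2 * G.cutSize S := by
    simp only [y, mulVec_sub, mulVec_smul, hL_one, smul_zero, sub_zero, dotProduct_smul,
      sub_dotProduct, smul_dotProduct, hone_L, hcut, smul_eq_mul]
    ring
  have hray := hL.mul_dotProduct_self_le_of_mulVec_eq_zero hμ hge hL_one hone_ne horth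
  rw [hyy, hyLy] at hray
  nlinarith

theorem IsRegularOfDegree.cutSize_support_le {k : ℕ} (hreg : G.IsRegularOfDegree k) {a : V}
    {c : G.Walk a a} (hc : c.IsCycle) : G.cutSize c.support.toFinset ≤ (k - 2) * c.length := by
  rw [← hc.card_support_toFinset, mul_comm, ← smul_eq_mul, ← sum_const]
  refine sum_le_sum fun v hv => ?_
  have h2 := hc.two_le_card_neighborFinset_inter (List.mem_toFinset.mp hv)
  have := card_sdiff_add_card_inter (G.neighborFinset v) c.support.toFinset
  rw [card_neighborFinset_eq_degree, hreg v] at this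
  omega

theorem IsRegularOfDegree.mul_card_sub_length_le {k : ℕ} (hreg : G.IsRegularOfDegree k)
    (hL : (G.lapMatrix ℝ).IsHermitian) {μ : ℝ} (hμ : 0 < μ) {i₀ : V}
    (hge : ∀ j, j ≠ i₀ → μ ≤ hL.eigenvalues j) {a : V} {c : G.Walk a a} (hc : c.IsCycle) :
    μ * ((Fintype.card V : ℝ) - c.length) ≤ (k - 2 : ℕ) * Fintype.card V := by
  have : Nonempty V := ⟨a⟩
  have hfiedler := mul_card_mul_sub_card_le_mul_cutSize hL hμ hge c.support.toFinset
  have hcut : (G.cutSize c.support.toFinset : ℝ) ≤ (k - 2 : ℕ) * c.length := by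
    exact_mod_cast hreg.cutSize_support_le hc
  have hlen : (0 : ℝ) < c.length := by exact_mod_cast hc.three_le_length.trans_lt' (by norm_num)
  rw [hc.card_support_toFinset] at hfiedler
  nlinarith [Nat.cast_nonneg (α := ℝ) (Fintype.card V)]

end SimpleGraph

theorem stmt_7 {V : Type*} [Fintype V] [DecidableEq V]
    (G : SimpleGraph V) [DecidableRel G.Adj]
    (n : ℕ) (hn : Fintype.card V = n)
    (hconn : G.Connected)
    (hreg : G.IsRegularOfDegree 3)
    (mu : ℝ) (hmu : ∃ hL : (G.lapMatrix ℝ).IsHermitian, IsSecondSmallest hL.eigenvalues mu)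
    :
    ((⌈(n : ℝ) * (mu - 1) / mu⌉.toNat : ℕ∞) ≤ G.egirth) := by
  obtain ⟨hL, i₀, i₁, -, -, hμ_eq, hge⟩ := hmu
  rcases le_or_gt mu 0 with hμ | hμ
  · have hμ0 : mu = 0 :=
      hμ.antisymm (hμ_eq ▸ (posSemidef_lapMatrix ℝ G).eigenvalues_nonneg i₁)
    simp [hμ0]
  obtain ⟨a, c, hc, hgirth⟩ :=
    exists_egirth_eq_length.mpr (hconn.not_isAcyclic_of_isRegularOfDegree hreg (by norm_num))
  have hbound := hreg.mul_card_sub_length_le hL hμ hge hc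
  rw [hn] at hbound
  have hceil : ⌈(n : ℝ) * (mu - 1) / mu⌉ ≤ c.length := by
    rw [Int.ceil_le, div_le_iff₀ hμ]
    push_cast at hbound ⊢
    linarith
  rw [hgirth]
  exact_mod_cast Int.toNat_le.mpr hceil
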